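/- Fix integers K ≥ 1, L ≥ 1, a real observation X, a standard deviation s > 0, grid values σ_1, …, σ_K > 0, mixture weights π_0, …, π_K ≥ 0 with Σ_{k=0}^K π_k = 1, and reals ω_1, …, ω_L. Let g(θ) = π_0 δ_0(θ) + Σ_{k=1}^K π_k (1/σ_k)φ(θ/σ_k) and f(z) = φ(z) + Σ_{l=1}^L ω_l (1/√(l!)) φ^{(l)}(z). Then the marginal density π_0 · (1/s) f(X/s) + Σ_{k=1}^K π_k ∫_ℝ (1/σ_k)φ(θ/σ_k) · (1/s) f((X − θ)/s) dθ equals Σ_{k=0}^K π_k ( p_{k0} + Σ_{l=1}^L ω_l p_{kl} ), where p_{kl} = (s^l / (σ_k² + s²)^{(l+1)/2}) · (1/√(l!)) · φ^{(l)}(X / √(σ_k² + s²)) and σ_0 = 0. -/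

import Mathlib

open MeasureTheory Real

/-- The standard Gaussian density `φ`. -/
noncomputable def phi (x : ℝ) : ℝ := (Real.sqrt (2 * Real.pi))⁻¹ * Real.exp (-x ^ 2 / 2)

/-- The `l`-th derivative `φ^{(l)}` of the standard Gaussian density (`φ^{(0)} = φ`). -/
noncomputable def phiD (l : ℕ) : ℝ → ℝ := iteratedDeriv l phi

/-!
For a component with `σₖ > 0` the marginal is a convolution of Gaussians. For the `φ` term,
completing the square gives the `N(0, τ²)` density with `τ² = σₖ² + s²`. Differentiating `l` times
in `X` under the integral sign, which is legitimate because `φ^{(l)}` is a Hermite polynomial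
times a Gaussian and hence bounded, turns it into `s^l / τ^{l+1} φ^{(l)}(X / τ)`. The point mass
is the case `σ₀ = 0`, `τ = s`, where no integral is involved.
-/

open Filter Topology

lemma phi_eq_exp : phi = fun x => (√(2 * π))⁻¹ * exp (-(x ^ 2 / 2)) := by
  funext x; rw [phi, neg_div]

lemma phiD_zero : phiD 0 = phi := iteratedDeriv_zero

lemma contDiff_phi : ContDiff ℝ ⊤ phi := by
  rw [phi_eq_exp]; fun_prop

lemma hasDerivAt_phiD (l : ℕ) (x : ℝ) : HasDerivAt (phiD l) (phiD (l + 1) x) x := by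
  unfold phiD
  rw [iteratedDeriv_succ]
  exact ((contDiff_phi.differentiable_iteratedDeriv l (WithTop.coe_lt_top _)) x).hasDerivAt

lemma continuous_phiD (l : ℕ) : Continuous (phiD l) :=
  continuous_iff_continuousAt.2 fun x => (hasDerivAt_phiD l x).continuousAt

lemma phiD_eq_hermite (l : ℕ) (x : ℝ) :
    phiD l x = Polynomial.eval x (Polynomial.C ((√(2 * π))⁻¹ * (-1) ^ l) *
      (Polynomial.hermite l).map (Int.castRingHom ℝ)) * exp (-(x ^ 2 / 2)) := by
  have hconst : ∀ n, deriv^[n] (fun y => (√(2 * π))⁻¹ * exp (-(y ^ 2 / 2))) =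
      fun y => (√(2 * π))⁻¹ * deriv^[n] (fun y => exp (-(y ^ 2 / 2))) y := by
    intro n
    induction n with
    | zero => rfl
    | succ n ih =>
      funext y
      rw [Function.iterate_succ_apply', Function.iterate_succ_apply', ih, deriv_const_mul_field]
  rw [phiD, phi_eq_exp, iteratedDeriv_eq_iterate, hconst]
  simp only [Polynomial.deriv_gaussian_eq_hermite_mul_gaussian, Polynomial.aeval_def,
    algebraMap_int_eq, Polynomial.eval₂_eq_eval_map, Polynomial.eval_mul, Polynomial.eval_C]
  ring

lemma tendsto_eval_mul_exp_neg_sq_cocompact (p : Polynomial ℝ) :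
    Tendsto (fun x => p.eval x * exp (-(x ^ 2 / 2))) (cocompact ℝ) (𝓝 0) := by
  have hmonomial (i : ℕ) : Tendsto (fun x : ℝ => x ^ i * exp (-(x ^ 2 / 2))) (cocompact ℝ) (𝓝 0) := by
    refine squeeze_zero_norm (fun x => ?_)
      (tendsto_rpow_abs_mul_exp_neg_mul_sq_cocompact one_half_pos i)
    rw [norm_mul, norm_pow, Real.norm_eq_abs, Real.norm_of_nonneg (exp_pos _).le,
      Real.rpow_natCast, neg_mul, one_div, inv_mul_eq_div]
  simp_rw [Polynomial.eval_eq_sum_range, Finset.sum_mul, mul_assoc]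
  simpa using tendsto_finsetSum _ fun i _ => (hmonomial i).const_mul (p.coeff i)

lemma exists_abs_phiD_le (l : ℕ) : ∃ C, ∀ x, |phiD l x| ≤ C := by
  have hdecay : Tendsto (phiD l) (cocompact ℝ) (𝓝 0) := by
    simp_rw [funext (phiD_eq_hermite l)]
    exact tendsto_eval_mul_exp_neg_sq_cocompact _
  let F : ZeroAtInftyContinuousMap ℝ ℝ := ⟨⟨phiD l, continuous_phiD l⟩, hdecay⟩
  obtain ⟨C, hC⟩ := isBounded_iff_forall_norm_le.1 F.isBounded_range
  exact ⟨C, fun x => hC _ ⟨x, rfl⟩⟩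

lemma exists_abs_mul_phiD_div_le (c s : ℝ) (l : ℕ) : ∃ C, ∀ y, |c * phiD l (y / s)| ≤ C := by
  obtain ⟨C, hC⟩ := exists_abs_phiD_le l
  exact ⟨|c| * C, fun y => abs_mul c _ ▸ mul_le_mul_of_nonneg_left (hC _) (abs_nonneg c)⟩

section Convolution

variable {g h : ℝ → ℝ}

lemma integrable_mul_comp_sub (hg : Integrable g) (hh : Continuous h) (hbdd : ∃ C, ∀ y, |h y| ≤ C)
    (x : ℝ) : Integrable fun θ => g θ * h (x - θ) := by
  obtain ⟨C, hC⟩ := hbdd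
  exact hg.mul_bdd (by fun_prop) (Eventually.of_forall fun θ => hC (x - θ))

lemma hasDerivAt_integral_mul_comp_sub {h' : ℝ → ℝ} (hg : Integrable g)
    (hbdd : ∃ C, ∀ y, |h y| ≤ C) (hderiv : ∀ y, HasDerivAt h (h' y) y) (hh' : Continuous h')
    (hbdd' : ∃ C, ∀ y, |h' y| ≤ C) (x : ℝ) :
    HasDerivAt (fun x => ∫ θ, g θ * h (x - θ)) (∫ θ, g θ * h' (x - θ)) x := by
  have hh : Continuous h := continuous_iff_continuousAt.2 fun y => (hderiv y).continuousAt
  obtain ⟨C, hC⟩ := hbdd'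
  refine (hasDerivAt_integral_of_dominated_loc_of_deriv_le
    (F := fun y θ => g θ * h (y - θ)) (F' := fun y θ => g θ * h' (y - θ))
    (bound := fun θ => |g θ| * C)
    (Metric.ball_mem_nhds x one_pos)
    (Eventually.of_forall fun y => (integrable_mul_comp_sub hg hh hbdd y).aestronglyMeasurable)
    (integrable_mul_comp_sub hg hh hbdd x)
    (integrable_mul_comp_sub hg hh' ⟨C, hC⟩ x).aestronglyMeasurable
    (Eventually.of_forall fun θ y _ => ?_) (hg.abs.mul_const C)
    (Eventually.of_forall fun θ y _ => ?_)).2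
  · rw [norm_mul, Real.norm_eq_abs, Real.norm_eq_abs]
    exact mul_le_mul_of_nonneg_left (hC _) (abs_nonneg _)
  · exact ((hderiv (y - θ)).comp y ((hasDerivAt_id y).sub_const θ)).const_mul (g θ) |>.congr_deriv
      (by simp)

end Convolution

noncomputable def noiseDensity (L : ℕ) (ω : ℕ → ℝ) (z : ℝ) : ℝ :=
  phi z + ∑ l ∈ Finset.Icc 1 L, ω l * (1 / √(Nat.factorial l)) * phiD l z

/-- The paper's `p_{kl}`, written in terms of `τ = √(σₖ² + s²)`. -/
noncomputable def marginalComponent (s τ X : ℝ) (l : ℕ) : ℝ :=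
  s ^ l / τ ^ (l + 1) * (1 / √(Nat.factorial l)) * phiD l (X / τ)

lemma one_div_mul_noiseDensity {s : ℝ} (hs : s ≠ 0) (X : ℝ) (L : ℕ) (ω : ℕ → ℝ) :
    1 / s * noiseDensity L ω (X / s) =
      marginalComponent s s X 0 + ∑ l ∈ Finset.Icc 1 L, ω l * marginalComponent s s X l := by
  have hscale (l : ℕ) : s ^ l / s ^ (l + 1) = 1 / s := by
    rw [pow_succ]; field_simp
  simp only [noiseDensity, marginalComponent, hscale, phiD_zero, mul_add, Finset.mul_sum]
  simp only [Nat.factorial_zero, Nat.cast_one, sqrt_one, div_one, mul_one]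
  congr 1
  exact Finset.sum_congr rfl fun l _ => by ring

section GaussianConvolution

variable {σ s : ℝ}

lemma integrable_phi_div (hσ : 0 < σ) : Integrable fun θ => 1 / σ * phi (θ / σ) := by
  refine ((integrable_exp_neg_mul_sq (b := 1 / (2 * σ ^ 2)) (by positivity)).const_mul
    (1 / σ * (√(2 * π))⁻¹)).congr (Eventually.of_forall fun θ => ?_)
  rw [phi_eq_exp]
  field_simp

lemma integral_phi_mul_phi (hσ : 0 < σ) (hs : 0 < s) (X : ℝ) :
    ∫ θ, 1 / σ * phi (θ / σ) * (1 / s * phi ((X - θ) / s)) =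
      1 / √(σ ^ 2 + s ^ 2) * phi (X / √(σ ^ 2 + s ^ 2)) := by
  have hvar : 0 < σ ^ 2 + s ^ 2 := by positivity
  set b := (σ ^ 2 + s ^ 2) / (2 * σ ^ 2 * s ^ 2)
  set c := σ ^ 2 * X / (σ ^ 2 + s ^ 2)
  set A := 1 / σ * (1 / s) * (√(2 * π))⁻¹ ^ 2 * exp (-(X ^ 2 / (2 * (σ ^ 2 + s ^ 2))))
  have complete_square (θ : ℝ) :
      (θ / σ) ^ 2 / 2 + ((X - θ) / s) ^ 2 / 2 = X ^ 2 / (2 * (σ ^ 2 + s ^ 2)) + b * (θ - c) ^ 2 := by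
    simp only [b, c]
    field_simp
    ring
  have hintegrand (θ : ℝ) :
      1 / σ * phi (θ / σ) * (1 / s * phi ((X - θ) / s)) = A * exp (-b * (θ - c) ^ 2) := by
    have hexp := congrArg (fun t => exp (-t)) (complete_square θ)
    simp only [neg_add, exp_add] at hexp
    simp only [phi_eq_exp, A, neg_mul]
    linear_combination (1 / σ * (1 / s) * (√(2 * π))⁻¹ ^ 2) * hexp
  have hsqrt : √(π / b) = √(2 * π) * σ * s / √(σ ^ 2 + s ^ 2) := by
    rw [← sqrt_sq (by positivity : 0 ≤ √(2 * π) * σ * s / √(σ ^ 2 + s ^ 2))]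
    congr 1
    rw [div_pow, mul_pow, mul_pow, sq_sqrt (by positivity), sq_sqrt hvar.le]
    simp only [b]
    field_simp
  calc ∫ θ, 1 / σ * phi (θ / σ) * (1 / s * phi ((X - θ) / s))
      = A * ∫ θ, exp (-b * (θ - c) ^ 2) := by simp_rw [hintegrand, integral_const_mul]
    _ = A * √(π / b) := by rw [integral_sub_right_eq_self (fun θ => exp (-b * θ ^ 2)), integral_gaussian]
    _ = 1 / √(σ ^ 2 + s ^ 2) * phi (X / √(σ ^ 2 + s ^ 2)) := by
      simp only [hsqrt, phi_eq_exp, div_pow, sq_sqrt hvar.le, A]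
      field_simp

lemma integral_phi_mul_phiD (hσ : 0 < σ) (hs : 0 < s) (l : ℕ) (X : ℝ) :
    ∫ θ, 1 / σ * phi (θ / σ) * (1 / s * phiD l ((X - θ) / s)) =
      s ^ l / √(σ ^ 2 + s ^ 2) ^ (l + 1) * phiD l (X / √(σ ^ 2 + s ^ 2)) := by
  set τ := √(σ ^ 2 + s ^ 2)
  have hτ : 0 < τ := sqrt_pos.2 (by positivity)
  induction l generalizing X with
  | zero => simpa [phiD_zero] using integral_phi_mul_phi hσ hs X
  | succ l ih =>
    have hderiv_scaled (y : ℝ) : HasDerivAt (fun y => 1 / s * phiD l (y / s))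
        (1 / s * (1 / s) * phiD (l + 1) (y / s)) y := by
      have := ((hasDerivAt_phiD l (y / s)).comp y ((hasDerivAt_id y).div_const s)).const_mul (1 / s)
      exact this.congr_deriv (by ring)
    have hlhs := hasDerivAt_integral_mul_comp_sub (integrable_phi_div hσ)
      (exists_abs_mul_phiD_div_le _ s l) hderiv_scaled
      (by have := continuous_phiD (l + 1); fun_prop) (exists_abs_mul_phiD_div_le _ s (l + 1)) X
    have hrhs : HasDerivAt (fun x => s ^ l / τ ^ (l + 1) * phiD l (x / τ))
        (s ^ l / τ ^ (l + 1) * (phiD (l + 1) (X / τ) * (1 / τ))) X :=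
      ((hasDerivAt_phiD l (X / τ)).comp X ((hasDerivAt_id X).div_const τ)).const_mul _
    simp_rw [ih] at hlhs
    have h := hlhs.unique hrhs
    have hfactor : ∫ θ, 1 / σ * phi (θ / σ) * (1 / s * (1 / s) * phiD (l + 1) ((X - θ) / s)) =
        1 / s * ∫ θ, 1 / σ * phi (θ / σ) * (1 / s * phiD (l + 1) ((X - θ) / s)) := by
      rw [← integral_const_mul]
      congr 1 with θ
      ring
    rw [hfactor] at h
    field_simp at h ⊢
    linear_combination h

lemma integral_phi_mul_noiseDensity (hσ : 0 < σ) (hs : 0 < s) (X : ℝ) (L : ℕ)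
    (ω : ℕ → ℝ) :
    ∫ θ, 1 / σ * phi (θ / σ) * (1 / s * noiseDensity L ω ((X - θ) / s)) =
      marginalComponent s √(σ ^ 2 + s ^ 2) X 0 +
        ∑ l ∈ Finset.Icc 1 L, ω l * marginalComponent s √(σ ^ 2 + s ^ 2) X l := by
  set G : ℕ → ℝ → ℝ := fun l θ => 1 / σ * phi (θ / σ) * (1 / s * phiD l ((X - θ) / s))
  have hG (l : ℕ) : Integrable (G l) :=
    integrable_mul_comp_sub (integrable_phi_div hσ) (by have := continuous_phiD l; fun_prop)
      (exists_abs_mul_phiD_div_le _ s l) X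
  have hexpand (θ : ℝ) : 1 / σ * phi (θ / σ) * (1 / s * noiseDensity L ω ((X - θ) / s)) =
      G 0 θ + ∑ l ∈ Finset.Icc 1 L, ω l * (1 / √(Nat.factorial l)) * G l θ := by
    simp only [G, noiseDensity, phiD_zero, mul_add, Finset.mul_sum]
    exact congrArg _ (Finset.sum_congr rfl fun l _ => by ring)
  rw [integral_congr_ae (ae_of_all _ hexpand), integral_add (hG 0)
    (integrable_finsetSum _ fun l _ => (hG l).const_mul _), integral_finsetSum _
    fun l _ => (hG l).const_mul _]
  simp only [G, integral_const_mul, integral_phi_mul_phiD hσ hs, marginalComponent]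
  simp only [Nat.factorial_zero, Nat.cast_one, sqrt_one, div_one, mul_one]
  exact congrArg _ (Finset.sum_congr rfl fun l _ => by ring)

end GaussianConvolution

theorem marginal_density_correlated_noise_general (K L : ℕ)
    (X s : ℝ) (hs : 0 < s)
    (σ : ℕ → ℝ) (hσ0 : σ 0 = 0) (hσpos : ∀ k, 1 ≤ k → k ≤ K → 0 < σ k)
    (pr : ℕ → ℝ)
    (ω : ℕ → ℝ) :
    let f : ℝ → ℝ := fun z =>
      phi z + ∑ l ∈ Finset.Icc 1 L, ω l * (1 / Real.sqrt (Nat.factorial l)) * phiD l z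
    let p : ℕ → ℕ → ℝ := fun k l =>
      s ^ l / (Real.sqrt (σ k ^ 2 + s ^ 2)) ^ (l + 1) * (1 / Real.sqrt (Nat.factorial l)) *
        phiD l (X / Real.sqrt (σ k ^ 2 + s ^ 2))
    pr 0 * ((1 / s) * f (X / s)) +
        ∑ k ∈ Finset.Icc 1 K,
          pr k * ∫ θ : ℝ, (1 / σ k) * phi (θ / σ k) * ((1 / s) * f ((X - θ) / s)) =
      ∑ k ∈ Finset.range (K + 1),
        pr k * (p k 0 + ∑ l ∈ Finset.Icc 1 L, ω l * p k l) := by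
  intro f p
  have hτ₀ : √(σ 0 ^ 2 + s ^ 2) = s := by
    rw [hσ0, zero_pow two_ne_zero, zero_add, sqrt_sq hs.le]
  have hpoint : pr 0 * ((1 / s) * f (X / s)) =
      pr 0 * (p 0 0 + ∑ l ∈ Finset.Icc 1 L, ω l * p 0 l) := by
    simp only [p, hτ₀]
    exact congrArg _ (one_div_mul_noiseDensity hs.ne' X L ω)
  have hgauss : ∀ k ∈ Finset.Icc 1 K,
      pr k * ∫ θ : ℝ, (1 / σ k) * phi (θ / σ k) * ((1 / s) * f ((X - θ) / s)) =
        pr k * (p k 0 + ∑ l ∈ Finset.Icc 1 L, ω l * p k l) := fun k hk =>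
    congrArg _ (integral_phi_mul_noiseDensity (hσpos k (Finset.mem_Icc.1 hk).1
      (Finset.mem_Icc.1 hk).2) hs X L ω)
  rw [Finset.range_eq_Ico, Finset.sum_eq_sum_Ico_succ_bot (Nat.add_one_pos K), zero_add,
    Finset.Ico_add_one_right_eq_Icc, ← hpoint, Finset.sum_congr rfl hgauss]

/-- Theorem 1 of the paper: the marginal density of one observation `X = θ + s Z` under the
prior `g = π₀ δ₀ + Σₖ πₖ N(0, σₖ²)` and correlated noise density
`f = φ + Σₗ ωₗ (1/√l!) φ^{(l)}`, where the point mass `δ₀` contributes `π₀ (1/s) f(X/s)`,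
equals `Σₖ πₖ (p_{k0} + Σₗ ωₗ p_{kl})` with
`p_{kl} = s^l/(σₖ²+s²)^{(l+1)/2} (1/√l!) φ^{(l)}(X/√(σₖ²+s²))` and `σ₀ = 0`. -/
theorem marginal_density_correlated_noise (K L : ℕ) (hK : 1 ≤ K) (hL : 1 ≤ L)
    (X s : ℝ) (hs : 0 < s)
    (σ : ℕ → ℝ) (hσ0 : σ 0 = 0) (hσpos : ∀ k, 1 ≤ k → k ≤ K → 0 < σ k)
    (pr : ℕ → ℝ) (hpr : ∀ k, k ≤ K → 0 ≤ pr k)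
    (hsum : ∑ k ∈ Finset.range (K + 1), pr k = 1)
    (ω : ℕ → ℝ) :
    let f : ℝ → ℝ := fun z =>
      phi z + ∑ l ∈ Finset.Icc 1 L, ω l * (1 / Real.sqrt (Nat.factorial l)) * phiD l z
    let p : ℕ → ℕ → ℝ := fun k l =>
      s ^ l / (Real.sqrt (σ k ^ 2 + s ^ 2)) ^ (l + 1) * (1 / Real.sqrt (Nat.factorial l)) *
        phiD l (X / Real.sqrt (σ k ^ 2 + s ^ 2))
    pr 0 * ((1 / s) * f (X / s)) +
        ∑ k ∈ Finset.Icc 1 K,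
          pr k * ∫ θ : ℝ, (1 / σ k) * phi (θ / σ k) * ((1 / s) * f ((X - θ) / s)) =
      ∑ k ∈ Finset.range (K + 1),
        pr k * (p k 0 + ∑ l ∈ Finset.Icc 1 L, ω l * p k l) :=
  marginal_density_correlated_noise_general K L X s hs σ hσ0 hσpos pr ω
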